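/- arXiv:2410.01041 — 2 statements merged into one kernel-verified Lean document; each statement's English description precedes it below -/
import Mathlib

section
/- Let ω₁ > 0, and define k(t,ρ) = exp(-i ω₁ ρ cos t) for t, ρ ∈ ℝ. Fix t₀, ρ₀ ∈ ℝ and r ∈ ℕ with r ≥ 1, and define the rank-r approximation k_r(t,ρ) = Σ_{l=0}^{r-1} ((-i ω₁)^l / l!) (cos t − cos t₀)^l exp(-i ω₁ ρ₀ (cos t − cos t₀)) (ρ − ρ₀)^l exp(-i ω₁ ρ cos t₀). Then for all (t,ρ) with ω₁ |ρ − ρ₀| |t − t₀| ≤ c, one has |k(t,ρ) − k_r(t,ρ)| ≤ c^r / r!. -/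
open Complex Finset

noncomputable def fexp (n : ℕ) (x : ℝ) : ℂ :=
  Complex.exp ((x : ℂ) * Complex.I) -
    ∑ l ∈ Finset.range n, ((x : ℂ) * Complex.I) ^ l / (Nat.factorial l : ℂ)

lemma fexp_continuous (n : ℕ) : Continuous (fexp n) := by
  unfold fexp
  fun_prop

lemma fexp_zero_eval (n : ℕ) : fexp (n + 1) 0 = 0 := by
  unfold fexp
  rw [Finset.sum_range_succ']
  simp [zero_pow]

lemma fexp_hasDerivAt (n : ℕ) (s : ℝ) :
    HasDerivAt (fexp (n + 1)) (Complex.I * fexp n s) s := by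
  have h1 : HasDerivAt (fun s : ℝ => (s : ℂ) * Complex.I) Complex.I s := by
    simpa using (Complex.ofRealCLM.hasDerivAt (x := s)).mul_const Complex.I
  have hexp : HasDerivAt (fun s : ℝ => Complex.exp ((s : ℂ) * Complex.I))
      (Complex.exp ((s : ℂ) * Complex.I) * Complex.I) s := h1.cexp
  have hsum : HasDerivAt
      (fun s : ℝ => ∑ l ∈ Finset.range (n + 1), ((s : ℂ) * Complex.I) ^ l / (Nat.factorial l : ℂ))
      (∑ l ∈ Finset.range (n + 1),
        ((l : ℂ) * ((s : ℂ) * Complex.I) ^ (l - 1) * Complex.I) / (Nat.factorial l : ℂ)) s := by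
    refine HasDerivAt.fun_sum fun l _ => ?_
    simpa using ((hasDerivAt_pow l ((s : ℂ) * Complex.I)).comp s h1).div_const (Nat.factorial l : ℂ)
  have htot := hexp.sub hsum
  have hval : Complex.exp ((s : ℂ) * Complex.I) * Complex.I -
      ∑ l ∈ Finset.range (n + 1),
        ((l : ℂ) * ((s : ℂ) * Complex.I) ^ (l - 1) * Complex.I) / (Nat.factorial l : ℂ) =
      Complex.I * fexp n s := by
    unfold fexp
    rw [Finset.sum_range_succ', mul_sub, Finset.mul_sum]
    have : ∀ i ∈ Finset.range n,
        (((i + 1 : ℕ) : ℂ) * ((s : ℂ) * Complex.I) ^ ((i + 1) - 1) * Complex.I) /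
          (Nat.factorial (i + 1) : ℂ) =
        Complex.I * (((s : ℂ) * Complex.I) ^ i / (Nat.factorial i : ℂ)) := by
      intro i _
      have h0 : ((Nat.factorial i : ℂ)) ≠ 0 :=
        Nat.cast_ne_zero.mpr (Nat.factorial_ne_zero i)
      have h1' : (((i : ℕ) + 1 : ℂ)) ≠ 0 := by
        exact_mod_cast (Nat.cast_ne_zero (R := ℂ)).mpr (Nat.succ_ne_zero i)
      rw [Nat.factorial_succ]
      push_cast
      field_simp
    rw [Finset.sum_congr rfl this]
    simp
    ring
  rw [hval] at htot; exact htot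

lemma fexp_bound_nonneg (n : ℕ) : ∀ x : ℝ, 0 ≤ x →
    ‖fexp n x‖ ≤ x ^ n / (Nat.factorial n) := by
  induction n with
  | zero =>
    intro x hx
    simp only [fexp, Finset.range_zero, Finset.sum_empty, sub_zero, pow_zero,
      Nat.factorial_zero, Nat.cast_one]
    rw [Complex.norm_exp_ofReal_mul_I]
    norm_num
  | succ n ih =>
    intro x hx
    have heq : fexp (n + 1) x = ∫ s in (0:ℝ)..x, Complex.I * fexp n s := by
      rw [intervalIntegral.integral_eq_sub_of_hasDerivAt
        (fun s _ => fexp_hasDerivAt n s)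
        (((continuous_const.mul (fexp_continuous n)).intervalIntegrable 0 x)),
        fexp_zero_eval, sub_zero]
    rw [heq]
    have hbound : ‖∫ s in (0:ℝ)..x, Complex.I * fexp n s‖ ≤
        |∫ s in (0:ℝ)..x, s ^ n / (Nat.factorial n)| := by
      apply intervalIntegral.norm_integral_le_abs_of_norm_le
      · filter_upwards [MeasureTheory.ae_restrict_mem measurableSet_uIoc] with t ht
        have ht' : t ∈ Set.Ioc 0 x := by
          rwa [Set.uIoc_of_le hx] at ht
        have := ih t ht'.1.le
        calc ‖Complex.I * fexp n t‖ = ‖fexp n t‖ := by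
              rw [norm_mul, Complex.norm_I, one_mul]
          _ ≤ t ^ n / (Nat.factorial n) := this
      · exact (Continuous.intervalIntegrable (by fun_prop) 0 x)
    refine hbound.trans ?_
    rw [intervalIntegral.integral_div, integral_pow]
    have hfac : ((n + 1).factorial : ℝ) = (n + 1) * (Nat.factorial n) := by
      rw [Nat.factorial_succ]; push_cast; ring
    rw [zero_pow (Nat.succ_ne_zero n), sub_zero, hfac,
      _root_.abs_of_nonneg (by positivity), div_div]

lemma fexp_neg (n : ℕ) (x : ℝ) : fexp n (-x) = (starRingEnd ℂ) (fexp n x) := by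
  unfold fexp
  rw [map_sub, ← Complex.exp_conj, map_sum]
  congr 1
  · congr 1
    rw [map_mul, Complex.conj_ofReal, Complex.conj_I]
    push_cast
    ring
  · refine Finset.sum_congr rfl fun l _ => ?_
    rw [map_div₀, map_pow, map_mul, Complex.conj_ofReal, Complex.conj_I, map_natCast]
    push_cast
    ring

lemma fexp_bound (n : ℕ) (x : ℝ) : ‖fexp n x‖ ≤ |x| ^ n / (Nat.factorial n) := by
  rcases le_or_gt 0 x with hx | hx
  · rw [_root_.abs_of_nonneg hx]; exact fexp_bound_nonneg n x hx
  · have : ‖fexp n x‖ = ‖fexp n (-x)‖ := by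
      rw [fexp_neg]; exact (RCLike.norm_conj _).symm
    rw [this, _root_.abs_of_neg hx]
    exact fexp_bound_nonneg n (-x) (by linarith)

lemma cos_lip (a b : ℝ) : |Real.cos a - Real.cos b| ≤ |a - b| := by
  rw [Real.cos_sub_cos, abs_mul, abs_mul]
  have h1 := Real.abs_sin_le_one ((a + b) / 2)
  have h2 : |Real.sin ((a - b) / 2)| ≤ |a - b| / 2 := by
    calc |Real.sin ((a - b) / 2)| ≤ |(a - b) / 2| := Real.abs_sin_le_abs
      _ = |a - b| / 2 := by rw [abs_div]; norm_num
  have h4 : |(-2 : ℝ)| = 2 := by norm_num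
  rw [h4]
  nlinarith [abs_nonneg (Real.sin ((a - b) / 2)), abs_nonneg (Real.sin ((a + b) / 2))]

/-- Low-rank approximation error for the kernel `k(t,ρ) = exp(-i ω₁ ρ cos t)`. -/
theorem stmt1 (ω₁ : ℝ) (hω : 0 < ω₁) (t₀ ρ₀ : ℝ) (r : ℕ) (hr : 1 ≤ r) (c : ℝ)
    (k : ℝ → ℝ → ℂ)
    (hk : ∀ t ρ : ℝ, k t ρ = Complex.exp (-Complex.I * ω₁ * ρ * Real.cos t))
    (kr : ℝ → ℝ → ℂ)
    (hkr : ∀ t ρ : ℝ, kr t ρ = ∑ l ∈ Finset.range r,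
      ((-Complex.I * ω₁) ^ l / (Nat.factorial l : ℂ)) *
        ((Real.cos t : ℂ) - (Real.cos t₀ : ℂ)) ^ l *
        Complex.exp (-Complex.I * ω₁ * ρ₀ * ((Real.cos t : ℂ) - (Real.cos t₀ : ℂ))) *
        ((ρ : ℂ) - (ρ₀ : ℂ)) ^ l *
        Complex.exp (-Complex.I * ω₁ * ρ * Real.cos t₀)) :
    ∀ t ρ : ℝ, ω₁ * |ρ - ρ₀| * |t - t₀| ≤ c →
      ‖k t ρ - kr t ρ‖ ≤ c ^ r / (Nat.factorial r) := by
  intro t ρ hcle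
  set x : ℝ := -(ω₁ * (ρ - ρ₀) * (Real.cos t - Real.cos t₀)) with hxdef
  have hdecomp : k t ρ - kr t ρ =
      (Complex.exp (-Complex.I * ω₁ * ρ₀ * ((Real.cos t : ℂ) - (Real.cos t₀ : ℂ))) *
        Complex.exp (-Complex.I * ω₁ * ρ * Real.cos t₀)) * fexp r x := by
    have e1 : (Complex.exp (-Complex.I * ω₁ * ρ₀ * ((Real.cos t : ℂ) - (Real.cos t₀ : ℂ))) *
          Complex.exp (-Complex.I * ω₁ * ρ * Real.cos t₀)) * Complex.exp ((x : ℂ) * Complex.I) =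
        k t ρ := by
      rw [hk, ← Complex.exp_add, ← Complex.exp_add]
      congr 1
      push_cast [hxdef]
      ring
    have e2 : (Complex.exp (-Complex.I * ω₁ * ρ₀ * ((Real.cos t : ℂ) - (Real.cos t₀ : ℂ))) *
          Complex.exp (-Complex.I * ω₁ * ρ * Real.cos t₀)) *
          (∑ l ∈ Finset.range r, ((x : ℂ) * Complex.I) ^ l / (Nat.factorial l : ℂ)) =
        kr t ρ := by
      rw [hkr, Finset.mul_sum]
      refine Finset.sum_congr rfl fun l _ => ?_
      have hbase : ((x : ℂ) * Complex.I) =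
          (-Complex.I * ω₁) * ((Real.cos t : ℂ) - (Real.cos t₀ : ℂ)) * ((ρ : ℂ) - (ρ₀ : ℂ)) := by
        push_cast [hxdef]; ring
      rw [hbase, mul_pow, mul_pow]
      ring
    unfold fexp
    rw [mul_sub, e1, e2]
  rw [hdecomp]
  have hnorm1 : ‖Complex.exp (-Complex.I * ω₁ * ρ₀ * ((Real.cos t : ℂ) - (Real.cos t₀ : ℂ)))‖ = 1 := by
    have : -Complex.I * ω₁ * ρ₀ * ((Real.cos t : ℂ) - (Real.cos t₀ : ℂ)) =
        ((-(ω₁ * ρ₀ * (Real.cos t - Real.cos t₀)) : ℝ) : ℂ) * Complex.I := by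
      push_cast; ring
    rw [this, Complex.norm_exp_ofReal_mul_I]
  have hnorm2 : ‖Complex.exp (-Complex.I * ω₁ * ρ * Real.cos t₀)‖ = 1 := by
    have : -Complex.I * (ω₁ : ℂ) * ρ * (Real.cos t₀ : ℂ) =
        ((-(ω₁ * ρ * Real.cos t₀) : ℝ) : ℂ) * Complex.I := by
      push_cast; ring
    rw [this, Complex.norm_exp_ofReal_mul_I]
  rw [norm_mul, norm_mul, hnorm1, hnorm2, one_mul, one_mul]
  have hxle : |x| ≤ c := by
    have : |x| = ω₁ * |ρ - ρ₀| * |Real.cos t - Real.cos t₀| := by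
      rw [hxdef, abs_neg, abs_mul, abs_mul, abs_of_pos hω]
    rw [this]
    calc ω₁ * |ρ - ρ₀| * |Real.cos t - Real.cos t₀|
        ≤ ω₁ * |ρ - ρ₀| * |t - t₀| :=
          mul_le_mul_of_nonneg_left (cos_lip t t₀) (by positivity)
      _ ≤ c := hcle
  calc ‖fexp r x‖ ≤ |x| ^ r / (Nat.factorial r) := fexp_bound r x
    _ ≤ c ^ r / (Nat.factorial r) := by
        gcongr
end

section
/- For any β₁, β₂ > 0, ∫₀^{β₁} √(ln(1 + β₂/ε)) dε ≤ β₁ Φ(β₂/β₁), where Φ(t) = √(ln(1+t) + t ln(1 + 1/t)). Moreover Φ(t) ≤ √(ln(1+t) + 1) for all t > 0, and Φ(t) → 0 as t → 0⁺. -/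
open Real MeasureTheory

/-- The auxiliary function `Φ(t) = √(ln(1+t) + t ln(1 + 1/t))`. -/
noncomputable def Phi (t : ℝ) : ℝ := Real.sqrt (Real.log (1 + t) + t * Real.log (1 + 1 / t))

/-- Dudley-type entropy integral bound, the estimate `Φ(t) ≤ √(ln(1+t)+1)`, and
`Φ(t) → 0` as `t → 0⁺`. -/
theorem stmt13 :
    (∀ β₁ β₂ : ℝ, 0 < β₁ → 0 < β₂ →
      (∫ x in Set.Ioc (0 : ℝ) β₁, Real.sqrt (Real.log (1 + β₂ / x))) ≤ β₁ * Phi (β₂ / β₁)) ∧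
    (∀ t : ℝ, 0 < t → Phi t ≤ Real.sqrt (Real.log (1 + t) + 1)) ∧
    Filter.Tendsto Phi (nhdsWithin 0 (Set.Ioi 0)) (nhds 0) := by
  refine ⟨?_, ?_, ?_⟩
  · intro β₁ β₂ hβ₁ hβ₂
    set L : ℝ → ℝ := fun x => Real.log (1 + β₂ / x) with hL
    set F : ℝ → ℝ := fun x => (x + β₂) * Real.log (x + β₂) - x * Real.log x with hF
    set S : ℝ := Real.log (1 + β₂ / β₁) + (β₂ / β₁) * Real.log (1 + 1 / (β₂ / β₁)) with hS
    have hFc : Continuous F :=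
      (Real.continuous_mul_log.comp (continuous_id.add continuous_const)).sub
        Real.continuous_mul_log
    have hderiv : ∀ x ∈ Set.Ioo (0 : ℝ) β₁, HasDerivAt F (L x) x := by
      intro x hx
      have hx0 : 0 < x := hx.1
      have hxc : 0 < x + β₂ := by positivity
      have h1 : HasDerivAt (fun y : ℝ => (y + β₂) * Real.log (y + β₂))
          (Real.log (x + β₂) + 1) x := by
        have := (Real.hasDerivAt_mul_log hxc.ne').comp x ((hasDerivAt_id x).add_const β₂)
        simpa [Function.comp_def] using this
      have h2 : HasDerivAt (fun y : ℝ => y * Real.log y) (Real.log x + 1) x :=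
        Real.hasDerivAt_mul_log hx0.ne'
      have := h1.sub h2
      convert this using 1
      show Real.log (1 + β₂ / x) = Real.log (x + β₂) + 1 - (Real.log x + 1)
      have : (1 : ℝ) + β₂ / x = (x + β₂) / x := by field_simp
      rw [this, Real.log_div hxc.ne' hx0.ne']
      ring
      all_goals rfl
    have hLnonneg : ∀ x ∈ Set.Ioo (0 : ℝ) β₁, 0 ≤ L x := by
      intro x hx
      have hx0 : 0 < x := hx.1
      apply Real.log_nonneg
      have : 0 < β₂ / x := by positivity
      linarith
    have hint : IntegrableOn L (Set.Ioc 0 β₁) := by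
      exact intervalIntegral.integrableOn_deriv_of_nonneg hFc.continuousOn hderiv hLnonneg
    have hint' : IntervalIntegrable L volume 0 β₁ := by
      rw [intervalIntegrable_iff_integrableOn_Ioc_of_le hβ₁.le]; exact hint
    have key : ∫ x in Set.Ioc (0 : ℝ) β₁, L x = β₁ * S := by
      have ha : Filter.Tendsto F (nhdsWithin 0 (Set.Ioi 0)) (nhds (F 0)) :=
        hFc.continuousAt.continuousWithinAt
      have hb : Filter.Tendsto F (nhdsWithin β₁ (Set.Iio β₁)) (nhds (F β₁)) :=
        hFc.continuousAt.continuousWithinAt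
      have := intervalIntegral.integral_eq_sub_of_hasDerivAt_of_tendsto hβ₁ hderiv hint' ha hb
      rw [intervalIntegral.integral_of_le hβ₁.le] at this
      rw [show (∫ x in Set.Ioc (0:ℝ) β₁, L x) = ∫ x in (0:ℝ)..β₁, L x from
        (intervalIntegral.integral_of_le hβ₁.le).symm] at *
      rw [this, hF, hS]
      have e1 : Real.log (1 + β₂ / β₁) = Real.log (β₁ + β₂) - Real.log β₁ := by
        rw [show (1:ℝ) + β₂ / β₁ = (β₁ + β₂) / β₁ by field_simp,
          Real.log_div (by positivity) hβ₁.ne']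
      have e2 : Real.log (1 + 1 / (β₂ / β₁)) = Real.log (β₁ + β₂) - Real.log β₂ := by
        rw [show (1:ℝ) + 1 / (β₂ / β₁) = (β₁ + β₂) / β₂ by field_simp; ring,
          Real.log_div (by positivity) hβ₂.ne']
      rw [e1, e2]
      simp only [zero_add, zero_mul, Real.log_zero, mul_zero, sub_zero]
      field_simp
      ring
    have hSnonneg : 0 ≤ S := by
      rw [hS]
      have h1 : 0 ≤ Real.log (1 + β₂ / β₁) := Real.log_nonneg (by
        have : 0 < β₂ / β₁ := by positivity
        linarith)
      have h2 : 0 ≤ Real.log (1 + 1 / (β₂ / β₁)) := Real.log_nonneg (by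
        have : 0 < 1 / (β₂ / β₁) := by positivity
        linarith)
      have : 0 < β₂ / β₁ := by positivity
      positivity
    -- Cauchy–Schwarz
    set μ : Measure ℝ := volume.restrict (Set.Ioc (0:ℝ) β₁) with hμ
    haveI : IsFiniteMeasure μ := by
      constructor
      rw [hμ, Measure.restrict_apply MeasurableSet.univ, Set.univ_inter, Real.volume_Ioc]
      exact ENNReal.ofReal_lt_top
    have measL : Measurable L := by
      apply Real.measurable_log.comp
      exact measurable_const.add (measurable_const.div measurable_id)
    have measf : AEStronglyMeasurable (fun x => Real.sqrt (L x)) μ :=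
      (Real.continuous_sqrt.measurable.comp measL).aestronglyMeasurable
    have hfmem : MemLp (fun x => Real.sqrt (L x)) (ENNReal.ofReal 2) μ := by
      rw [show ENNReal.ofReal 2 = 2 by norm_num]
      rw [memLp_two_iff_integrable_sq measf]
      apply (hint.congr ?_)
      filter_upwards [ae_restrict_mem measurableSet_Ioc] with x hx
      have hx0 : 0 < x := hx.1
      rw [Real.sq_sqrt]
      apply Real.log_nonneg
      have : 0 < β₂ / x := by positivity
      linarith
    have hgmem : MemLp (fun _ : ℝ => (1:ℝ)) (ENNReal.ofReal 2) μ := memLp_const 1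
    have hpq : Real.HolderConjugate 2 2 := ⟨by norm_num, by norm_num, by norm_num⟩
    have CS := MeasureTheory.integral_mul_le_Lp_mul_Lq_of_nonneg hpq
      (Filter.Eventually.of_forall (fun x => Real.sqrt_nonneg (L x)))
      (Filter.Eventually.of_forall (fun _ => zero_le_one)) hfmem hgmem
    simp only [mul_one, Real.one_rpow] at CS
    have eq1 : ∫ x, Real.sqrt (L x) ^ (2:ℝ) ∂μ = β₁ * S := by
      rw [← key]
      apply setIntegral_congr_fun measurableSet_Ioc
      intro x hx
      have hx0 : 0 < x := hx.1
      show Real.sqrt (L x) ^ (2:ℝ) = L x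
      rw [show ((2:ℝ)) = ((2:ℕ):ℝ) by norm_num, Real.rpow_natCast, Real.sq_sqrt]
      apply Real.log_nonneg
      have : 0 < β₂ / x := by positivity
      linarith
    have eq2 : ∫ _x, (1:ℝ) ∂μ = β₁ := by
      rw [hμ]
      simp [Real.volume_Ioc, ENNReal.toReal_ofReal hβ₁.le, hβ₁.le]
    rw [eq1, eq2] at CS
    have : (β₁ * S) ^ ((1:ℝ)/2) * β₁ ^ ((1:ℝ)/2) = β₁ * Phi (β₂ / β₁) := by
      rw [← Real.sqrt_eq_rpow, ← Real.sqrt_eq_rpow,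
        ← Real.sqrt_mul (by positivity : (0:ℝ) ≤ β₁ * S),
        show β₁ * S * β₁ = β₁ ^ 2 * S by ring,
        Real.sqrt_mul (sq_nonneg β₁), Real.sqrt_sq hβ₁.le]
      rfl
    rw [this] at CS
    exact CS
  · intro t ht
    apply Real.sqrt_le_sqrt
    have h1 : Real.log (1 + 1/t) ≤ 1/t := by
      have := Real.log_le_sub_one_of_pos (show (0:ℝ) < 1 + 1/t by positivity)
      linarith
    have h2 : t * Real.log (1 + 1/t) ≤ t * (1/t) := by
      exact mul_le_mul_of_nonneg_left h1 ht.le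
    rw [mul_one_div, div_self ht.ne'] at h2
    linarith
  · have hh : Filter.Tendsto (fun t => Real.log (1 + t) + t * Real.log (1 + 1 / t))
        (nhdsWithin 0 (Set.Ioi 0)) (nhds 0) := by
      have h1 : Filter.Tendsto (fun t : ℝ => Real.log (1 + t))
          (nhdsWithin 0 (Set.Ioi 0)) (nhds 0) := by
        have : Filter.Tendsto (fun t : ℝ => Real.log (1 + t)) (nhds 0) (nhds 0) := by
          have := (Real.continuousAt_log (by norm_num : (1:ℝ) + 0 ≠ 0)).comp
            ((continuous_const.add continuous_id).continuousAt (x := (0:ℝ)))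
          simpa [Function.comp_def] using this.tendsto
        exact this.mono_left nhdsWithin_le_nhds
      have h2 : Filter.Tendsto (fun t : ℝ => t * Real.log (1 + t))
          (nhdsWithin 0 (Set.Ioi 0)) (nhds 0) := by
        have : Filter.Tendsto (fun t : ℝ => t * Real.log (1 + t)) (nhds 0) (nhds 0) := by
          have hc : ContinuousAt (fun t : ℝ => t * Real.log (1 + t)) 0 := by
            apply ContinuousAt.mul continuousAt_id
            exact (Real.continuousAt_log (by norm_num)).comp
              ((continuous_const.add continuous_id).continuousAt)
          simpa using hc.tendsto
        exact this.mono_left nhdsWithin_le_nhds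
      have h3 : Filter.Tendsto (fun t : ℝ => Real.log t * t)
          (nhdsWithin 0 (Set.Ioi 0)) (nhds 0) := by
        have := tendsto_log_mul_rpow_nhdsGT_zero (zero_lt_one)
        simpa using this
      have hcomb : Filter.Tendsto
          (fun t : ℝ => Real.log (1 + t) + (t * Real.log (1 + t) - Real.log t * t))
          (nhdsWithin 0 (Set.Ioi 0)) (nhds 0) := by
        have := h1.add (h2.sub h3)
        simpa using this
      apply hcomb.congr'
      filter_upwards [self_mem_nhdsWithin] with t (ht : t ∈ Set.Ioi (0:ℝ))
      have ht0 : 0 < t := ht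
      have e : Real.log (1 + 1/t) = Real.log (1 + t) - Real.log t := by
        rw [show (1:ℝ) + 1/t = (1 + t)/t by field_simp; ring,
          Real.log_div (by positivity) ht0.ne']
      rw [e]; ring
    have hsq : Filter.Tendsto Real.sqrt (nhds 0) (nhds 0) := by
      have := Real.continuous_sqrt.continuousAt (x := (0:ℝ))
      simpa using this.tendsto
    exact hsq.comp hh
end
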